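/- Let n ≥ 1 be an integer, s > 0 a real number, φ*_k = √(2/(n+2))·sin((k+1)π/(n+2)), ρ* = φ*(φ*)ᵀ, and let M be the (n+1)×(n+1) matrix with entries M_{k,k'} = sinc((k−k')π/(s+1))/(s+1), where sinc(x) = sin(x)/x for x ≠ 0 and sinc(0) = 1. Assume that I − M is positive semidefinite. Then the matrix τ := ((s+1)/s)·((I − M) ∘ ρ*), where ∘ denotes the entrywise (Hadamard) product, is positive semidefinite with trace 1, and ρ̃(s) + s·τ is a diagonal matrix, where ρ̃(s)_{k,k'} = φ*_k φ*_{k'}·sinc((k−k')π/(s+1)). Consequently the robustness of coherence of ρ̃(s) is at most s. -/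

import Mathlib

open Real Matrix

/-- `sinc x = sin x / x` with `sinc 0 = 1`. -/
noncomputable def sinc (x : ℝ) : ℝ := if x = 0 then 1 else Real.sin x / x

/-- The optimal pure probe state `φ*_k = √(2/(n+2))·sin((k+1)π/(n+2))`. -/
noncomputable def φstar (n : ℕ) : Fin (n+1) → ℝ := fun k =>
  Real.sqrt (2 / ((n : ℝ) + 2)) * Real.sin (((k : ℝ) + 1) * π / (n + 2))

/-- The discrete Dyson (sinc) kernel `M_{k,k'} = sinc((k−k')π/(s+1))/(s+1)`. -/
noncomputable def dysonM (n : ℕ) (s : ℝ) : Matrix (Fin (n+1)) (Fin (n+1)) ℝ :=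
  Matrix.of fun k k' => _root_.sinc (((k : ℝ) - (k' : ℝ)) * π / (s + 1)) / (s + 1)

/-- The twirled probe state `ρ̃(s)_{k,k'} = φ*_k φ*_{k'} sinc((k−k')π/(s+1))`. -/
noncomputable def ρtwirl (n : ℕ) (s : ℝ) : Matrix (Fin (n+1)) (Fin (n+1)) ℝ :=
  Matrix.of fun k k' =>
    φstar n k * φstar n k' * _root_.sinc (((k : ℝ) - (k' : ℝ)) * π / (s + 1))

/-- The robustness of coherence of `ρ` (with respect to the computational
basis): the least `s ≥ 0` such that `ρ + sτ` is diagonal for some state `τ`. -/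
noncomputable def RoC {d : ℕ} (ρ : Matrix (Fin d) (Fin d) ℝ) : ℝ :=
  sInf {s : ℝ | 0 ≤ s ∧ ∃ τ : Matrix (Fin d) (Fin d) ℝ,
    τ.PosSemidef ∧ τ.trace = 1 ∧ ∀ i j, i ≠ j → (ρ + s • τ) i j = 0}

/-! The twirled state is `ρ̃(s) = (s + 1) • (M ⊙ ρ*)`, so adding `s • τ = (s + 1) • ((I − M) ⊙ ρ*)`
leaves `(s + 1) • (I ⊙ ρ*)`, which is diagonal. `τ` is positive semidefinite by the Schur product
theorem, and since `M` has constant diagonal `1 / (s + 1)` its trace is `∑ φ*_k² = 1`; the latter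
identity is `∑_{k < m} sin²(kπ/m) = m/2`, i.e. the vanishing of the sum of the `m`-th roots of unity.
-/

open Finset

lemma Real.sum_range_cos_two_pi_mul_div {m : ℕ} (hm : 1 < m) :
    ∑ k ∈ range m, cos (2 * π * k / m) = 0 := by
  have hζ := Complex.isPrimitiveRoot_exp m (by omega)
  have hre : ∀ k : ℕ, (Complex.exp (2 * π * Complex.I / m) ^ k).re = cos (2 * π * k / m) := by
    intro k
    rw [← Complex.exp_nat_mul, ← Complex.exp_ofReal_mul_I_re]
    congr 2
    push_cast
    ring
  simpa only [Complex.re_sum, hre, Complex.zero_re] using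
    congrArg Complex.re (hζ.geom_sum_eq_zero hm)

lemma Real.sum_range_sin_sq_mul_pi_div {m : ℕ} (hm : 1 < m) :
    ∑ k ∈ range m, sin (k * π / m) ^ 2 = m / 2 := by
  have hcos : ∑ k ∈ range m, cos (2 * (k * π / m)) = 0 := by
    rw [← Real.sum_range_cos_two_pi_mul_div hm]
    exact sum_congr rfl fun k _ => by ring_nf
  simp only [sin_sq_eq_half_sub, sum_sub_distrib, ← sum_div, hcos, sum_const, card_range,
    nsmul_eq_mul]
  ring

lemma sum_φstar_sq (n : ℕ) : ∑ k, φstar n k ^ 2 = 1 := by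
  have hsin : ∑ k : Fin (n + 1), sin (((k : ℝ) + 1) * π / (n + 2)) ^ 2 = ((n : ℝ) + 2) / 2 := by
    have h := Real.sum_range_sin_sq_mul_pi_div (m := n + 2) (by omega)
    rw [sum_range_succ'] at h
    push_cast at h
    simpa [Fin.sum_univ_eq_sum_range (fun k : ℕ => sin (((k : ℝ) + 1) * π / (n + 2)) ^ 2)] using h
  simp only [φstar, mul_pow, Real.sq_sqrt (by positivity : (0 : ℝ) ≤ 2 / ((n : ℝ) + 2)),
    ← mul_sum, hsin]
  field_simp

lemma dysonM_apply_self (n : ℕ) (s : ℝ) (k : Fin (n + 1)) : dysonM n s k k = 1 / (s + 1) := by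
  simp [dysonM, _root_.sinc]

lemma ρtwirl_eq_smul_hadamard (n : ℕ) {s : ℝ} (hs : s + 1 ≠ 0) :
    ρtwirl n s = (s + 1) • (dysonM n s ⊙ vecMulVec (φstar n) (φstar n)) := by
  ext i j
  simp only [ρtwirl, dysonM, of_apply, Matrix.smul_apply, hadamard_apply, vecMulVec_apply,
    smul_eq_mul]
  field_simp

lemma Matrix.smul_hadamard_add_smul_one_sub_hadamard {ι : Type*} [DecidableEq ι]
    {s : ℝ} (hs : s ≠ 0) (M P : Matrix ι ι ℝ) :
    (s + 1) • (M ⊙ P) + s • (((s + 1) / s) • ((1 - M) ⊙ P)) = (s + 1) • diagonal P.diag := by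
  rw [smul_smul, mul_div_cancel₀ _ hs, ← smul_add, ← add_hadamard, add_sub_cancel, one_hadamard]

lemma RoC_le_of_witness {d : ℕ} {ρ τ : Matrix (Fin d) (Fin d) ℝ} {s : ℝ} (hs : 0 ≤ s)
    (hτ : τ.PosSemidef) (htr : τ.trace = 1) (hoff : ∀ i j, i ≠ j → (ρ + s • τ) i j = 0) :
    RoC ρ ≤ s :=
  csInf_le ⟨0, fun _ hx => hx.1⟩ ⟨hs, τ, hτ, htr, hoff⟩

theorem twirled_state_coherence_bound_general (n : ℕ) (s : ℝ) (hs : 0 < s)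
    (hM : ((1 : Matrix (Fin (n+1)) (Fin (n+1)) ℝ) - dysonM n s).PosSemidef)
    (τ : Matrix (Fin (n+1)) (Fin (n+1)) ℝ)
    (hτdef : τ = ((s + 1) / s) •
      Matrix.hadamard ((1 : Matrix (Fin (n+1)) (Fin (n+1)) ℝ) - dysonM n s)
        (vecMulVec (φstar n) (φstar n))) :
    τ.PosSemidef ∧ τ.trace = 1 ∧
      (∀ i j, i ≠ j → (ρtwirl n s + s • τ) i j = 0) ∧
      RoC (ρtwirl n s) ≤ s := by
  have hpsd : τ.PosSemidef := by
    rw [hτdef]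
    simpa using (hM.hadamard (posSemidef_vecMulVec_self_star (φstar n))).smul
      (by positivity : 0 ≤ (s + 1) / s)
  have htr : τ.trace = 1 := by
    rw [← sum_φstar_sq n, hτdef, trace]
    refine sum_congr rfl fun k _ => ?_
    simp only [diag_apply, Matrix.smul_apply, hadamard_apply, Matrix.sub_apply, one_apply_eq,
      dysonM_apply_self, vecMulVec_apply, smul_eq_mul]
    field_simp
    ring
  have hoff : ∀ i j, i ≠ j → (ρtwirl n s + s • τ) i j = 0 := by
    intro i j hij
    rw [hτdef, ρtwirl_eq_smul_hadamard n (by positivity),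
      smul_hadamard_add_smul_one_sub_hadamard hs.ne', Matrix.smul_apply, diagonal_apply_ne _ hij,
      smul_zero]
  exact ⟨hpsd, htr, hoff, RoC_le_of_witness hs.le hpsd htr hoff⟩

/-- If `I − M ⪰ 0`, then `τ = ((s+1)/s)·(I−M)∘ρ*` is a state such that
`ρ̃(s) + sτ` is diagonal; consequently `𝒞_R(ρ̃(s)) ≤ s`. -/
theorem twirled_state_coherence_bound (n : ℕ) (hn : 1 ≤ n) (s : ℝ) (hs : 0 < s)
    (hM : ((1 : Matrix (Fin (n+1)) (Fin (n+1)) ℝ) - dysonM n s).PosSemidef)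
    (τ : Matrix (Fin (n+1)) (Fin (n+1)) ℝ)
    (hτdef : τ = ((s + 1) / s) •
      Matrix.hadamard ((1 : Matrix (Fin (n+1)) (Fin (n+1)) ℝ) - dysonM n s)
        (vecMulVec (φstar n) (φstar n))) :
    τ.PosSemidef ∧ τ.trace = 1 ∧
      (∀ i j, i ≠ j → (ρtwirl n s + s • τ) i j = 0) ∧
      RoC (ρtwirl n s) ≤ s :=
  twirled_state_coherence_bound_general n s hs hM τ hτdef
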